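/- arXiv:1607.02217 — 4 statements merged into one kernel-verified Lean document; each statement's English description precedes it below -/
import Mathlib

section
/- (Comparison principle without drift term) Let y : [0,∞) → [0,∞) be a continuously differentiable function such that ẏ(t) ≤ μ(t)y(t) holds whenever y(t) ≥ ψ(t), where μ is a USF and ψ : [0,∞) → [0,∞) is a class-K function. Then for any given constant T > 0 and any t ≥ T, y(t) ≤ max{ y(t−T) · exp(∫_{t−T}^{t} μ(s) ds), (sup_{t−T ≤ s ≤ t} ψ(s)) · e^{φ_μ(T)} }. -/
/-- A class-K function: continuous, strictly increasing on `[0,∞)`, vanishing at `0`,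
and `[0,∞)`-valued on `[0,∞)`. -/
def IsClassK (γ : ℝ → ℝ) : Prop :=
  ContinuousOn γ (Set.Ici 0) ∧ StrictMonoOn γ (Set.Ici 0) ∧ γ 0 = 0 ∧ ∀ s ≥ (0:ℝ), 0 ≤ γ s

/-- A uniformly stable function (USF): continuous on `[0,∞)` with
`∫_{t0}^t μ ≤ -ε (t - t0) + δ` for some `ε > 0`, `δ ≥ 0` and all `t ≥ t0 ≥ 0`. -/
def IsUSF (μ : ℝ → ℝ) : Prop :=
  ContinuousOn μ (Set.Ici 0) ∧
  ∃ ε > (0:ℝ), ∃ δ ≥ (0:ℝ), ∀ t0 t : ℝ, 0 ≤ t0 → t0 ≤ t →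
    (∫ s in t0..t, μ s) ≤ -ε * (t - t0) + δ

/-- The overshoot `φ_μ(T) = sup_{t ≥ 0} max_{θ ∈ [0,T]} ∫_t^{t+θ} μ(s) ds` of a function `μ`. -/
noncomputable def overshoot (μ : ℝ → ℝ) (T : ℝ) : ℝ :=
  sSup {v : ℝ | ∃ t ≥ (0:ℝ), ∃ θ ∈ Set.Icc (0:ℝ) T, v = ∫ s in t..t + θ, μ s}

lemma gronwall_aux (μ y : ℝ → ℝ) (hμ : ContinuousOn μ (Set.Ici 0))
    (hy : ContDiffOn ℝ 1 y (Set.Ici 0)) (a b : ℝ) (ha : 0 ≤ a) (hab : a ≤ b)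
    (hD : ∀ s ∈ Set.Ioo a b, derivWithin y (Set.Ici 0) s ≤ μ s * y s) :
    y b ≤ y a * Real.exp (∫ s in a..b, μ s) := by
  have hsub : Set.Icc a b ⊆ Set.Ici (0:ℝ) :=
    (Set.Icc_subset_Ici_self).trans (Set.Ici_subset_Ici.mpr ha)
  set F : ℝ → ℝ := fun s => ∫ u in a..s, μ u with hFdef
  have hFc : ContinuousOn F (Set.Icc a b) := by
    have : MeasureTheory.IntegrableOn μ (Set.uIcc a b) := by
      rw [Set.uIcc_of_le hab]
      exact (hμ.mono hsub).integrableOn_compact isCompact_Icc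
    simpa [Set.uIcc_of_le hab] using intervalIntegral.continuousOn_primitive_interval this
  have hFd : ∀ x ∈ Set.Ioo a b, HasDerivAt F (μ x) x := by
    intro x hx
    have hx0 : (0:ℝ) < x := lt_of_le_of_lt ha hx.1
    have hcx : ContinuousAt μ x := hμ.continuousAt (Ici_mem_nhds hx0)
    have hint : IntervalIntegrable μ MeasureTheory.volume a x := by
      apply ContinuousOn.intervalIntegrable
      rw [Set.uIcc_of_le hx.1.le]
      exact hμ.mono ((Set.Icc_subset_Icc_right hx.2.le).trans hsub)
    have hmeas : StronglyMeasurableAtFilter μ (nhds x) MeasureTheory.volume :=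
      ContinuousAt.stronglyMeasurableAtFilter isOpen_Ioi
        (fun z hz => hμ.continuousAt (Ici_mem_nhds hz)) x hx0
    exact intervalIntegral.integral_hasDerivAt_right hint hmeas hcx
  set g : ℝ → ℝ := fun s => y s * Real.exp (-F s) with hgdef
  have hyc : ContinuousOn y (Set.Icc a b) := (hy.continuousOn).mono hsub
  have hgc : ContinuousOn g (Set.Icc a b) :=
    hyc.mul ((Real.continuous_exp.comp_continuousOn hFc.neg))
  have hgd : ∀ x ∈ Set.Ioo a b, HasDerivAt g
      ((derivWithin y (Set.Ici 0) x - μ x * y x) * Real.exp (-F x)) x := by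
    intro x hx
    have hx0 : (0:ℝ) < x := lt_of_le_of_lt ha hx.1
    have hnhd : Set.Ici (0:ℝ) ∈ nhds x := Ici_mem_nhds hx0
    have hyd : DifferentiableAt ℝ y x :=
      ((hy.differentiableOn one_ne_zero) x (le_of_lt hx0)).differentiableAt hnhd
    have hyder : HasDerivAt y (derivWithin y (Set.Ici 0) x) x := by
      rw [derivWithin_of_mem_nhds hnhd]; exact hyd.hasDerivAt
    have hed : HasDerivAt (fun s => Real.exp (-F s)) (Real.exp (-F x) * (-μ x)) x :=
      by have := (Real.hasDerivAt_exp (-F x)).comp x ((hFd x hx).neg); exact this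
    have this : HasDerivAt (fun s => y s * Real.exp (-F s))
        (derivWithin y (Set.Ici 0) x * Real.exp (-F x) + y x * (Real.exp (-F x) * -μ x)) x :=
      hyder.mul hed
    convert this using 1
    ring
  have hanti : AntitoneOn g (Set.Icc a b) := by
    apply antitoneOn_of_deriv_nonpos (convex_Icc a b) hgc
    · intro x hx
      rw [interior_Icc] at hx
      exact ((hgd x hx).differentiableAt).differentiableWithinAt
    · intro x hx
      rw [interior_Icc] at hx
      rw [(hgd x hx).deriv]
      have h1 := hD x hx
      have h2 := Real.exp_pos (-F x)
      nlinarith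
  have hgab : g b ≤ g a := hanti (Set.left_mem_Icc.mpr hab) (Set.right_mem_Icc.mpr hab) hab
  have hFa : F a = 0 := intervalIntegral.integral_same
  have : y b * Real.exp (-F b) ≤ y a := by simpa [hgdef, hFa] using hgab
  have hpos := Real.exp_pos (F b)
  calc y b = (y b * Real.exp (-F b)) * Real.exp (F b) := by
        rw [mul_assoc, ← Real.exp_add]; simp
    _ ≤ y a * Real.exp (F b) := mul_le_mul_of_nonneg_right this hpos.le

/-- Comparison principle without drift term: if `y : [0,∞) → [0,∞)` is continuously
differentiable and `ẏ(t) ≤ μ(t) y(t)` whenever `y(t) ≥ ψ(t)`, where `μ` is a USF and `ψ` is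
class-K, then for any `T > 0` and any `t ≥ T`,
`y(t) ≤ max{y(t-T) exp(∫_{t-T}^t μ), (sup_{[t-T,t]} ψ) e^{φ_μ(T)}}`. -/
theorem comparison_principle_no_drift (μ ψ y : ℝ → ℝ)
    (hμ : IsUSF μ)
    (hψ : IsClassK ψ)
    (hy : ContDiffOn ℝ 1 y (Set.Ici 0))
    (hy0 : ∀ t ≥ (0:ℝ), 0 ≤ y t)
    (hD : ∀ t ≥ (0:ℝ), ψ t ≤ y t → derivWithin y (Set.Ici 0) t ≤ μ t * y t) :
    ∀ T > (0:ℝ), ∀ t ≥ T,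
      y t ≤ max (y (t - T) * Real.exp (∫ s in (t - T)..t, μ s))
          (sSup (ψ '' Set.Icc (t - T) t) * Real.exp (overshoot μ T)) := by
  
  intro T hT t ht
  obtain ⟨hμc, ε, hε, δ, hδ, hineq⟩ := hμ
  set a := t - T with ha_def
  have ha0 : 0 ≤ a := by simp [ha_def]; linarith
  have hat : a ≤ t := by simp [ha_def]; linarith
  have hsubIcc : Set.Icc a t ⊆ Set.Ici (0:ℝ) :=
    Set.Icc_subset_Ici_self.trans (Set.Ici_subset_Ici.mpr ha0)
  set V : Set ℝ := {v : ℝ | ∃ t ≥ (0:ℝ), ∃ θ ∈ Set.Icc (0:ℝ) T, v = ∫ s in t..t + θ, μ s} with hV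
  have hbddV : BddAbove V := by
    refine ⟨δ, ?_⟩
    rintro v ⟨t0, ht0, θ, ⟨hθ0, hθT⟩, rfl⟩
    have h := hineq t0 (t0 + θ) ht0 (by linarith)
    nlinarith
  have hover0 : (0:ℝ) ≤ overshoot μ T := by
    have h0 : (0:ℝ) ∈ V := ⟨0, le_rfl, 0, ⟨le_rfl, hT.le⟩, by simp⟩
    exact le_csSup hbddV h0
  have hψc : ContinuousOn ψ (Set.Icc a t) := hψ.1.mono hsubIcc
  have hbddψ : BddAbove (ψ '' Set.Icc a t) :=
    (isCompact_Icc.image_of_continuousOn hψc).bddAbove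
  by_cases hcase : ∃ s ∈ Set.Icc a t, y s ≤ ψ s
  · set S : Set ℝ := Set.Icc a t ∩ (fun s => y s - ψ s) ⁻¹' Set.Iic 0 with hS
    have hSclosed : IsClosed S := by
      apply ContinuousOn.preimage_isClosed_of_isClosed _ isClosed_Icc isClosed_Iic
      exact ((hy.continuousOn.mono hsubIcc).sub hψc)
    have hSne : S.Nonempty := by
      obtain ⟨s, hs1, hs2⟩ := hcase
      exact ⟨s, hs1, by simp [Set.mem_preimage]; linarith⟩
    have hSbdd : BddAbove S := ⟨t, fun s hs => hs.1.2⟩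
    set τ := sSup S with hτdef
    have hτS : τ ∈ S := hSclosed.csSup_mem hSne hSbdd
    have hτIcc : τ ∈ Set.Icc a t := hτS.1
    have hτψ : y τ ≤ ψ τ := by
      have := hτS.2; simp [Set.mem_preimage] at this; linarith
    have hτ0 : 0 ≤ τ := le_trans ha0 hτIcc.1
    have hG : y t ≤ y τ * Real.exp (∫ s in τ..t, μ s) := by
      apply gronwall_aux μ y hμc hy τ t hτ0 hτIcc.2
      intro s hs
      have hs0 : (0:ℝ) ≤ s := le_trans hτ0 hs.1.le
      have hsI : s ∈ Set.Icc a t := ⟨le_trans hτIcc.1 hs.1.le, hs.2.le⟩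
      have hns : s ∉ S := fun hmem => absurd (le_csSup hSbdd hmem) (not_le.mpr hs.1)
      have : ψ s ≤ y s := by
        by_contra hcon
        exact hns ⟨hsI, by simp [Set.mem_preimage]; linarith⟩
      exact hD s hs0 this
    have hIV : (∫ s in τ..t, μ s) ∈ V := by
      have h1 := hτIcc.1
      have h2 := hτIcc.2
      refine ⟨τ, hτ0, t - τ, ⟨by linarith, by simp [ha_def] at h1; linarith⟩, ?_⟩
      norm_num
    have hIle : (∫ s in τ..t, μ s) ≤ overshoot μ T := le_csSup hbddV hIV
    have hψτle : ψ τ ≤ sSup (ψ '' Set.Icc a t) :=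
      le_csSup hbddψ ⟨τ, hτIcc, rfl⟩
    have hψτ0 : 0 ≤ ψ τ := hψ.2.2.2 τ hτ0
    have hfin : y t ≤ sSup (ψ '' Set.Icc a t) * Real.exp (overshoot μ T) := by
      calc y t ≤ y τ * Real.exp (∫ s in τ..t, μ s) := hG
        _ ≤ ψ τ * Real.exp (∫ s in τ..t, μ s) :=
            mul_le_mul_of_nonneg_right hτψ (Real.exp_pos _).le
        _ ≤ sSup (ψ '' Set.Icc a t) * Real.exp (overshoot μ T) :=
            mul_le_mul hψτle (Real.exp_le_exp.mpr hIle) (Real.exp_pos _).le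
              (le_trans hψτ0 hψτle)
    exact le_trans hfin (le_max_right _ _)
  · push_neg at hcase
    have hG : y t ≤ y a * Real.exp (∫ s in a..t, μ s) := by
      apply gronwall_aux μ y hμc hy a t ha0 hat
      intro s hs
      have hsI : s ∈ Set.Icc a t := ⟨hs.1.le, hs.2.le⟩
      exact hD s (le_trans ha0 hs.1.le) (hcase s hsI).le
    exact le_trans hG (le_max_left _ _)
end

section
/- Let ω > 0 and let μ : [0,∞) → ℝ be locally integrable and ω-periodic (μ(t + ω) = μ(t) for all t ≥ 0). Then there exist constants ε > 0 and δ ≥ 0 such that ∫_{t0}^{t} μ(s) ds ≤ −ε(t − t0) + δ for all t ≥ t0 ≥ 0 (i.e., μ satisfies the defining inequality of a uniformly stable function) if and only if ∫_{0}^{ω} μ(t) dt < 0. -/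
/-- For a locally integrable `ω`-periodic function `μ : [0,∞) → ℝ`, the defining inequality
of a uniformly stable function (existence of `ε > 0`, `δ ≥ 0` with
`∫_{t0}^t μ ≤ -ε (t - t0) + δ` for all `t ≥ t0 ≥ 0`) holds if and only if
`∫_0^ω μ(t) dt < 0`. -/
theorem periodic_usf_iff (ω : ℝ) (hω : 0 < ω) (μ : ℝ → ℝ)
    (hloc : ∀ a b : ℝ, 0 ≤ a → IntervalIntegrable μ MeasureTheory.volume a b)
    (hper : ∀ t ≥ (0:ℝ), μ (t + ω) = μ t) :
    (∃ ε > (0:ℝ), ∃ δ ≥ (0:ℝ), ∀ t0 t : ℝ, 0 ≤ t0 → t0 ≤ t →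
      (∫ s in t0..t, μ s) ≤ -ε * (t - t0) + δ) ↔ (∫ t in (0:ℝ)..ω, μ t) < 0 := by
  set I : ℝ := ∫ t in (0:ℝ)..ω, μ t with hIdef
  set F : ℝ → ℝ := fun x => ∫ s in (0:ℝ)..x, μ s with hFdef
  -- F(x + ω) = F x + I for x ≥ 0
  have hFadd : ∀ x : ℝ, 0 ≤ x → F (x + ω) = F x + I := by
    intro x hx
    have h1 : F ω + (∫ s in ω..(x+ω), μ s) = F (x + ω) :=
      intervalIntegral.integral_add_adjacent_intervals (hloc 0 ω le_rfl)
        (hloc ω (x+ω) hω.le)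
    have h2 : (∫ s in (0:ℝ)..x, μ (s + ω)) = ∫ s in ((0:ℝ)+ω)..(x+ω), μ s :=
      intervalIntegral.integral_comp_add_right μ ω
    have h3 : (∫ s in (0:ℝ)..x, μ (s + ω)) = ∫ s in (0:ℝ)..x, μ s := by
      apply intervalIntegral.integral_congr
      intro s hs
      rw [Set.uIcc_of_le hx] at hs
      exact hper s hs.1
    have h4 : F ω = I := rfl
    rw [zero_add] at h2
    simp only [hFdef] at h1 h4 ⊢
    linarith
  -- F(n ω) = n I
  have hFn : ∀ n : ℕ, F (n * ω) = n * I := by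
    intro n
    induction n with
    | zero => simp [hFdef]
    | succ n ih =>
      have : ((n:ℝ)+1) * ω = n * ω + ω := by ring
      rw [Nat.cast_add, Nat.cast_one, this, hFadd (n*ω) (by positivity), ih]
      ring
  -- ∫_{t0}^{t} = F t - F t0
  have hFdiff : ∀ t0 t : ℝ, 0 ≤ t0 → (∫ s in t0..t, μ s) = F t - F t0 := by
    intro t0 t h0
    have h1 : F t0 + (∫ s in t0..t, μ s) = F t :=
      intervalIntegral.integral_add_adjacent_intervals (hloc 0 t0 le_rfl)
        (hloc t0 t h0)
    linarith
  constructor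
  · rintro ⟨ε, hε, δ, hδ, h⟩
    by_contra hI
    push_neg at hI
    obtain ⟨n, hn⟩ := exists_nat_gt (δ / (ε * ω))
    have h1 := h 0 (n * ω) le_rfl (by positivity)
    rw [hFdiff 0 (n*ω) le_rfl] at h1
    have h2 : F 0 = 0 := by simp [hFdef]
    rw [hFn n, h2] at h1
    have h3 : (0:ℝ) ≤ n * I := by positivity
    have h4 : δ / (ε * ω) < n := hn
    have h5 : δ < n * (ε * ω) := by
      rwa [div_lt_iff₀ (by positivity)] at h4
    nlinarith
  · intro hI
    set ε : ℝ := -I / ω with hεdef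
    have hε : 0 < ε := by
      apply div_pos (by linarith) hω
    set G : ℝ → ℝ := fun x => F x + ε * x with hGdef
    have hGper : ∀ x : ℝ, 0 ≤ x → G (x + ω) = G x := by
      intro x hx
      simp only [hGdef, hFadd x hx, hεdef]
      field_simp
      ring
    -- G continuous on [0, ω], hence bounded
    have hcont : ContinuousOn G (Set.Icc 0 ω) := by
      have h1 : ContinuousOn F (Set.uIcc 0 ω) :=
        intervalIntegral.continuousOn_primitive_interval' (hloc 0 ω le_rfl)
          Set.left_mem_uIcc
      rw [Set.uIcc_of_le hω.le] at h1
      exact h1.add ((continuous_const.mul continuous_id).continuousOn)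
    obtain ⟨C, hC⟩ := (isCompact_Icc).exists_bound_of_continuousOn hcont
    -- all of [0, n ω]
    have hGbound : ∀ n : ℕ, ∀ t : ℝ, 0 ≤ t → t ≤ n * ω → ‖G t‖ ≤ C := by
      intro n
      induction n with
      | zero =>
        intro t ht ht'
        simp only [Nat.cast_zero, zero_mul] at ht'
        have : t = 0 := le_antisymm ht' ht
        exact this ▸ hC 0 (Set.mem_Icc.2 ⟨le_rfl, hω.le⟩)
      | succ n ih =>
        intro t ht ht'
        by_cases hcase : t ≤ ω
        · exact hC t (Set.mem_Icc.2 ⟨ht, hcase⟩)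
        · push_neg at hcase
          have h1 : 0 ≤ t - ω := by linarith
          have h2 : t - ω ≤ n * ω := by
            push_cast at ht' ⊢
            linarith
          have h3 : G (t - ω + ω) = G (t - ω) := hGper _ h1
          rw [sub_add_cancel] at h3
          rw [h3]
          exact ih (t - ω) h1 h2
    have hGbound' : ∀ t : ℝ, 0 ≤ t → |G t| ≤ C := by
      intro t ht
      obtain ⟨n, hn⟩ := exists_nat_ge (t / ω)
      have : t ≤ n * ω := by
        rwa [div_le_iff₀ hω] at hn
      exact hGbound n t ht this
    have hC0 : 0 ≤ C := le_trans (abs_nonneg _) (hGbound' 0 le_rfl)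
    refine ⟨ε, hε, 2 * C, by linarith, ?_⟩
    intro t0 t h0 h01
    rw [hFdiff t0 t h0]
    have hb0 : |G t0| ≤ C := hGbound' t0 h0
    have hb1 : |G t| ≤ C := hGbound' t (le_trans h0 h01)
    have e1 : F t = G t - ε * t := by simp [hGdef]
    have e2 : F t0 = G t0 - ε * t0 := by simp [hGdef]
    rw [e1, e2]
    have := abs_le.1 hb0
    have := abs_le.1 hb1
    nlinarith
end

section
/- Let c ∈ (0,1), q > 0, and e > 0 be constants with q·e ≥ 1 and q(1−c)e < 1, and let μ : [0,∞) → ℝ be the 1-periodic function defined by μ(t) = −1 + q·e for t − ⌊t⌋ ∈ [c, 1) and μ(t) = −1 for t − ⌊t⌋ ∈ [0, c). Then the overshoot of μ at T = 1 satisfies φ_μ(1) = −1 + q(1−c)e + c. -/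
open MeasureTheory Set

/-- For the 1-periodic function `μ` which equals `-1` when the fractional part of `t` is in
`[0, c)` and equals `-1 + q·e` when the fractional part of `t` is in `[c, 1)`, with
`c ∈ (0,1)`, `q, e > 0`, `q·e ≥ 1` and `q(1-c)e < 1`, the overshoot at `T = 1` is
`φ_μ(1) = -1 + q(1-c)e + c`. -/
theorem overshoot_periodic_example (c q e : ℝ)
    (hc : c ∈ Set.Ioo (0:ℝ) 1) (hq : 0 < q) (he : 0 < e)
    (hqe : 1 ≤ q * e) (hqce : q * (1 - c) * e < 1)
    (μ : ℝ → ℝ)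
    (hμ : ∀ t ≥ (0:ℝ), μ t = if Int.fract t < c then (-1 : ℝ) else -1 + q * e) :
    overshoot μ 1 = -1 + q * (1 - c) * e + c := by
  obtain ⟨hc0, hc1⟩ := hc
  set M : ℝ := -1 + q * (1 - c) * e + c with hM
  set A : Set ℝ := {s | c ≤ Int.fract s} with hA
  have hAm : MeasurableSet A := measurableSet_le measurable_const measurable_fract
  -- key upper bound for each window
  have key : ∀ t : ℝ, 0 ≤ t → ∀ θ : ℝ, θ ∈ Set.Icc (0:ℝ) 1 →
      (∫ s in t..t+θ, μ s) ≤ M := by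
    intro t ht θ hθ
    obtain ⟨hθ0, hθ1⟩ := hθ
    set n : ℝ := (⌊t⌋ : ℝ) + 1 with hn
    have hfl : (⌊t⌋ : ℝ) ≤ t := Int.floor_le t
    have htn : t < n := Int.lt_floor_add_one t
    -- rewrite μ as constant plus indicator on the window
    have hcong : Set.EqOn μ (fun s => -1 + q * e * A.indicator (fun _ => (1:ℝ)) s)
        (Set.uIcc t (t+θ)) := by
      intro s hs
      rw [Set.uIcc_of_le (by linarith)] at hs
      have hs0 : (0:ℝ) ≤ s := le_trans ht hs.1
      rw [hμ s hs0]
      simp only [Set.indicator_apply, hA, Set.mem_setOf_eq]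
      by_cases h : Int.fract s < c
      · rw [if_pos h, if_neg (not_le.mpr h)]
        ring
      · rw [if_neg h, if_pos (not_lt.mp h)]
        ring
    rw [intervalIntegral.integral_congr hcong]
    have hint : IntervalIntegrable (A.indicator (fun _ => (1:ℝ))) volume t (t+θ) := by
      constructor
      · exact ((MeasureTheory.integrableOn_const_iff (C := (1:ℝ))).mpr (Or.inr measure_Ioc_lt_top)).indicator hAm
      · exact ((MeasureTheory.integrableOn_const_iff (C := (1:ℝ))).mpr (Or.inr measure_Ioc_lt_top)).indicator hAm
    rw [intervalIntegral.integral_add (intervalIntegrable_const) (hint.const_mul _),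
      intervalIntegral.integral_const, intervalIntegral.integral_const_mul]
    have hIoc : (∫ s in t..t+θ, A.indicator (fun _ => (1:ℝ)) s)
        = (volume (A ∩ Set.Ioc t (t+θ))).toReal := by
      rw [intervalIntegral.integral_of_le (by linarith),
        MeasureTheory.setIntegral_indicator hAm, Set.inter_comm]
      simp
      rfl
    rw [hIoc]
    set L : ℝ := (volume (A ∩ Set.Ioc t (t+θ))).toReal with hL
    have hL0 : 0 ≤ L := ENNReal.toReal_nonneg
    have hLθ : L ≤ θ := by
      refine ENNReal.toReal_le_of_le_ofReal hθ0 ?_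
      calc volume (A ∩ Set.Ioc t (t+θ)) ≤ volume (Set.Ioc t (t+θ)) :=
            measure_mono Set.inter_subset_right
        _ = ENNReal.ofReal θ := by rw [Real.volume_Ioc]; ring_nf
    have hLc : L ≤ 1 - c := by
      have hsub : A ∩ Set.Ioc t (t+θ) ⊆
          Set.Icc (max t ((⌊t⌋:ℝ)+c)) n ∪ Set.Icc (n+c) (t+θ) := by
        rintro s ⟨hsA, hst, hstθ⟩
        have hsA' : c ≤ Int.fract s := hsA
        rcases le_or_gt s n with h1 | h1
        · left
          rcases eq_or_lt_of_le h1 with rfl | h2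
          · exfalso
            have h0 : Int.fract n = 0 := by
              rw [hn, show ((⌊t⌋:ℝ) + 1) = ((⌊t⌋ + 1 : ℤ) : ℝ) by push_cast; ring,
                Int.fract_intCast]
            rw [h0] at hsA'
            linarith
          · have hfloor : ⌊s⌋ = ⌊t⌋ := by
              rw [Int.floor_eq_iff]
              constructor
              · linarith
              · push_cast
                linarith [h2, hn]
            have hfr : Int.fract s = s - (⌊t⌋:ℝ) := by
              rw [Int.fract, hfloor]
            rw [hfr] at hsA'
            refine ⟨max_le (le_of_lt hst) (by linarith), h1⟩
        · right
          have hsn1 : s < n + 1 := by linarith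
          have hfloor : ⌊s⌋ = ⌊t⌋ + 1 := by
            rw [Int.floor_eq_iff]
            constructor
            · push_cast; linarith [hn]
            · push_cast; linarith [hn]
          have hfr : Int.fract s = s - n := by
            rw [Int.fract, hfloor]; push_cast [hn]; ring
          rw [hfr] at hsA'
          exact ⟨by linarith, hstθ⟩
      have hmax : (⌊t⌋:ℝ) + c ≤ n := by rw [hn]; linarith
      have hv : volume (A ∩ Set.Ioc t (t+θ)) ≤
          ENNReal.ofReal (n - max t ((⌊t⌋:ℝ)+c)) + ENNReal.ofReal ((t+θ) - (n+c)) := by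
        refine le_trans (measure_mono hsub) (le_trans (measure_union_le _ _) ?_)
        rw [Real.volume_Icc, Real.volume_Icc]
      have ha : 0 ≤ n - max t ((⌊t⌋:ℝ)+c) := by
        have : max t ((⌊t⌋:ℝ)+c) ≤ n := max_le (le_of_lt htn) hmax
        linarith
      have hL' : L ≤ (n - max t ((⌊t⌋:ℝ)+c)) + max ((t+θ) - (n+c)) 0 := by
        refine ENNReal.toReal_le_of_le_ofReal
          (add_nonneg ha (le_max_right _ _)) (le_trans hv ?_)
        calc ENNReal.ofReal (n - max t ((⌊t⌋:ℝ)+c)) + ENNReal.ofReal ((t+θ) - (n+c))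
            ≤ ENNReal.ofReal (n - max t ((⌊t⌋:ℝ)+c))
              + ENNReal.ofReal (max ((t+θ) - (n+c)) 0) := by
              gcongr
              exact le_max_left _ _
          _ = ENNReal.ofReal ((n - max t ((⌊t⌋:ℝ)+c)) + max ((t+θ) - (n+c)) 0) :=
              (ENNReal.ofReal_add ha (le_max_right _ _)).symm
      -- real arithmetic: min-type bound
      rcases le_total ((t+θ) - (n+c)) 0 with hb | hb
      · rw [max_eq_right hb] at hL'
        have : n - max t ((⌊t⌋:ℝ)+c) ≤ n - ((⌊t⌋:ℝ)+c) := by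
          gcongr; exact le_max_right _ _
        rw [hn] at this
        linarith
      · rw [max_eq_left hb] at hL'
        have : n - max t ((⌊t⌋:ℝ)+c) ≤ n - t := by
          gcongr; exact le_max_left _ _
        linarith
    -- conclude the arithmetic bound
    have hqe0 : (0:ℝ) ≤ q * e := by positivity
    simp only [smul_eq_mul]
    rcases le_total θ (1 - c) with hcase | hcase
    · have h1 : q * e * L ≤ q * e * θ := by nlinarith
      have h2 : (q * e - 1) * θ ≤ (q * e - 1) * (1 - c) := by nlinarith
      rw [hM]; nlinarith
    · have h1 : q * e * L ≤ q * e * (1 - c) := by nlinarith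
      rw [hM]; nlinarith
  -- the supremum set
  have hne : (0:ℝ) ∈ {v : ℝ | ∃ t ≥ (0:ℝ), ∃ θ ∈ Set.Icc (0:ℝ) 1, v = ∫ s in t..t + θ, μ s} := by
    exact ⟨0, le_refl _, 0, ⟨le_refl _, zero_le_one⟩, by simp⟩
  have hbdd : ∀ v ∈ {v : ℝ | ∃ t ≥ (0:ℝ), ∃ θ ∈ Set.Icc (0:ℝ) 1, v = ∫ s in t..t + θ, μ s},
      v ≤ M := by
    rintro v ⟨t, ht, θ, hθ, rfl⟩
    exact key t ht θ hθ
  -- M is attained at t = c, θ = 1 - c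
  have hmem : M ∈ {v : ℝ | ∃ t ≥ (0:ℝ), ∃ θ ∈ Set.Icc (0:ℝ) 1, v = ∫ s in t..t + θ, μ s} := by
    refine ⟨c, le_of_lt hc0, 1 - c, ⟨by linarith, by linarith⟩, ?_⟩
    have hone : c + (1 - c) = 1 := by ring
    rw [hone]
    have hae : ∀ᵐ x : ℝ ∂volume, x ∈ Set.uIoc c 1 → μ x = -1 + q * e := by
      have h1 : ∀ᵐ x : ℝ ∂volume, x ≠ 1 := by
        rw [MeasureTheory.ae_iff]
        have : {x : ℝ | ¬ x ≠ 1} = {1} := by ext x; simp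
        rw [this]
        exact Real.volume_singleton
      filter_upwards [h1] with x hx hmemx
      rw [Set.uIoc_of_le (le_of_lt hc1)] at hmemx
      obtain ⟨hx1, hx2⟩ := hmemx
      have hx2' : x < 1 := lt_of_le_of_ne hx2 hx
      have hfr : Int.fract x = x := Int.fract_eq_self.mpr ⟨by linarith, hx2'⟩
      rw [hμ x (by linarith), hfr, if_neg (by linarith)]
    rw [intervalIntegral.integral_congr_ae hae, intervalIntegral.integral_const]
    rw [hM]; simp only [smul_eq_mul]; ring
  apply le_antisymm
  · exact csSup_le ⟨0, hne⟩ hbdd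
  · exact le_csSup ⟨M, hbdd⟩ hmem
end

section
/- Let c ∈ (0,1) and e ≥ 1 be real constants. Then there exists a real number q > 1 satisfying both −1 + q(1−c)e < 0 and q > exp(−1 + q(1−c)e + c) if and only if e < 1 / ((1−c)·exp(c)). -/
/-- For constants `c ∈ (0,1)` and `e ≥ 1`, there exists `q > 1` with both
`-1 + q(1-c)e < 0` and `q > exp(-1 + q(1-c)e + c)` if and only if
`e < 1/((1-c)·exp c)`. -/
theorem exists_q_iff (c e : ℝ) (hc : c ∈ Set.Ioo (0:ℝ) 1) (he : 1 ≤ e) :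
    (∃ q : ℝ, 1 < q ∧ -1 + q * (1 - c) * e < 0 ∧
      Real.exp (-1 + q * (1 - c) * e + c) < q) ↔
    e < 1 / ((1 - c) * Real.exp c) := by
  obtain ⟨hc0, hc1⟩ := hc
  have h1c : (0:ℝ) < 1 - c := by linarith
  have hec : (0:ℝ) < Real.exp c := Real.exp_pos c
  constructor
  · rintro ⟨q, hq1, h2, h3⟩
    have hq0 : (0:ℝ) < q := by linarith
    have key : q * (1 - c) * e ≤ Real.exp (q * (1 - c) * e - 1) := by
      have := Real.add_one_le_exp (q * (1 - c) * e - 1)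
      linarith
    have hA : q * (1 - c) * e * Real.exp c < q := by
      calc q * (1 - c) * e * Real.exp c
          ≤ Real.exp (q * (1 - c) * e - 1) * Real.exp c :=
            mul_le_mul_of_nonneg_right key hec.le
        _ = Real.exp (-1 + q * (1 - c) * e + c) := by
            rw [← Real.exp_add]; ring_nf
        _ < q := h3
    rw [lt_div_iff₀ (by positivity)]
    nlinarith [hA]
  · intro h
    have hK : (0:ℝ) < (1 - c) * e := by nlinarith
    have hKe : (1 - c) * e * Real.exp c < 1 := by
      rw [lt_div_iff₀ (by positivity)] at h
      nlinarith
    set K := (1 - c) * e with hKdef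
    set t := (1 + K * Real.exp c) / 2 with htdef
    have hKec : 0 < K * Real.exp c := by positivity
    have ht1 : t < 1 := by rw [htdef]; linarith
    have ht0 : K * Real.exp c < t := by rw [htdef]; linarith
    have hKt : K < t := by nlinarith [Real.one_lt_exp_iff.mpr hc0]
    have hqA : t / K * (1 - c) * e = t := by
      field_simp [hKdef]
      ring
    refine ⟨t / K, ?_, ?_, ?_⟩
    · rw [lt_div_iff₀ hK]; linarith
    · rw [hqA]; linarith
    · rw [hqA, lt_div_iff₀ hK]
      have he1 : Real.exp (t - 1) < 1 := Real.exp_lt_one_iff.mpr (by linarith)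
      calc Real.exp (-1 + t + c) * K
          = Real.exp c * Real.exp (t - 1) * K := by
            rw [← Real.exp_add]; ring_nf
        _ < Real.exp c * 1 * K := by
            apply mul_lt_mul_of_pos_right _ hK
            exact mul_lt_mul_of_pos_left he1 hec
        _ = K * Real.exp c := by ring
        _ < t := ht0
end
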